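/- Let s_n = (n+1)·(n+1)^(1/(n+1)) − n·n^(1/n) for integers n ≥ 1, and let a_s(x) = x^(1/x)·(x + 1 − ln x) − x for x > 0. Then 1 + a_s(n+1)/(n+1) < s_n < 1 + a_s(n)/n for all n ≥ 1, and a_s(n) tends to 1 as n → ∞. -/

import Mathlib

/-! With `T x = x * x ^ (1 / x)` we have `s n = T (n + 1) - T n` and `1 + a_s x / x = T' x`,
so by the mean value theorem `s n = T' c` for some `c ∈ (n, n + 1)`, and both estimates follow once
`T'` is strictly decreasing on `[1, ∞)`. That holds because
`T'' x = x ^ (1 / x) * ((1 - log x) ^ 2 - x) / x ^ 3`, and `(1 - t) ^ 2 < exp t` for `t > 0`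
(compare `|1 - t|` with the quadratic lower bound for `exp (t / 2)`).
For the limit, with `u = log x / x` the bounds `1 + u ≤ exp u ≤ 1 / (1 - u)` squeeze `a_s x`
between `1 + u - (log x) ^ 2 / x` and `1 / (1 - u)`, both of which tend to `1`. -/

open Real Filter

noncomputable def s (n : ℕ) : ℝ :=
  ((n : ℝ) + 1) * ((n : ℝ) + 1) ^ (1 / ((n : ℝ) + 1)) - (n : ℝ) * (n : ℝ) ^ (1 / (n : ℝ))

noncomputable def a_s (x : ℝ) : ℝ := x ^ (1 / x) * (x + 1 - Real.log x) - x

noncomputable def T (x : ℝ) : ℝ := x * exp (log x / x)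

noncomputable def T' (x : ℝ) : ℝ := exp (log x / x) * ((x + 1 - log x) / x)

noncomputable def T'' (x : ℝ) : ℝ := exp (log x / x) * ((1 - log x) ^ 2 - x) / x ^ 3

lemma rpow_one_div_self_eq_exp {x : ℝ} (hx : 0 < x) : x ^ (1 / x) = exp (log x / x) := by
  rw [rpow_def_of_pos hx, mul_one_div]

lemma a_s_eq_exp {x : ℝ} (hx : 0 < x) : a_s x = exp (log x / x) * (x + 1 - log x) - x := by
  rw [a_s, rpow_one_div_self_eq_exp hx]

lemma one_add_a_s_div_self {x : ℝ} (hx : 0 < x) : 1 + a_s x / x = T' x := by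
  rw [a_s_eq_exp hx, T']
  field_simp
  ring

lemma s_eq_T_sub_T {n : ℕ} (hn : 0 < n) : s n = T (n + 1) - T n := by
  rw [s, T, T, rpow_one_div_self_eq_exp (by positivity), rpow_one_div_self_eq_exp (by positivity)]

lemma hasDerivAt_log_div_self {x : ℝ} (hx : 0 < x) :
    HasDerivAt (fun y => log y / y) ((1 - log x) / x ^ 2) x :=
  ((hasDerivAt_log hx.ne').div (hasDerivAt_id' x) hx.ne').congr_deriv (by field_simp)

lemma hasDerivAt_T {x : ℝ} (hx : 0 < x) : HasDerivAt T (T' x) x :=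
  ((hasDerivAt_id' x).mul (hasDerivAt_log_div_self hx).exp).congr_deriv (by rw [T']; field_simp; ring)

lemma hasDerivAt_T' {x : ℝ} (hx : 0 < x) : HasDerivAt T' (T'' x) x := by
  have hfactor : HasDerivAt (fun y => (y + 1 - log y) / y) ((log x - 2) / x ^ 2) x :=
    ((((hasDerivAt_id' x).add_const 1).sub (hasDerivAt_log hx.ne')).div
      (hasDerivAt_id' x) hx.ne').congr_deriv (by simp only [Pi.sub_apply]; field_simp; ring)
  exact ((hasDerivAt_log_div_self hx).exp.mul hfactor).congr_deriv (by rw [T'']; field_simp; ring)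

lemma sq_one_sub_lt_exp {t : ℝ} (ht : 0 < t) : (1 - t) ^ 2 < exp t := by
  have hquad := quadratic_le_exp_of_nonneg (half_pos ht).le
  have hsq : exp t = exp (t / 2) ^ 2 := by rw [← exp_nat_mul]; ring_nf
  rw [hsq]
  exact sq_lt_sq' (by nlinarith [sq_nonneg (t - 2)]) (by nlinarith)

lemma T''_neg {x : ℝ} (hx : 1 < x) : T'' x < 0 := by
  have hlog : (1 - log x) ^ 2 < x := by
    simpa [exp_log (one_pos.trans hx)] using sq_one_sub_lt_exp (log_pos hx)
  have hx3 : 0 < x ^ 3 := by positivity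
  exact div_neg_of_neg_of_pos (mul_neg_of_pos_of_neg (exp_pos _) (by linarith)) hx3

lemma strictAntiOn_T' : StrictAntiOn T' (Set.Ici 1) := by
  refine strictAntiOn_of_hasDerivWithinAt_neg (f' := T'') (convex_Ici 1)
    (fun x hx => (hasDerivAt_T' (one_pos.trans_le hx)).continuousAt.continuousWithinAt) ?_ ?_ <;>
    simp only [interior_Ici, Set.mem_Ioi]
  exacts [fun x hx => (hasDerivAt_T' (one_pos.trans hx)).hasDerivWithinAt, fun x => T''_neg]

lemma exists_s_eq_T' {n : ℕ} (hn : 0 < n) : ∃ c ∈ Set.Ioo (n : ℝ) (n + 1), s n = T' c := by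
  have hn' : (0 : ℝ) < n := by exact_mod_cast hn
  obtain ⟨c, hc, hslope⟩ := exists_hasDerivAt_eq_slope T T' (lt_add_one (n : ℝ))
    (fun x hx => (hasDerivAt_T (hn'.trans_le hx.1)).continuousAt.continuousWithinAt)
    (fun x hx => hasDerivAt_T (hn'.trans hx.1))
  exact ⟨c, hc, by rw [hslope, s_eq_T_sub_T hn, add_sub_cancel_left, div_one]⟩

lemma one_add_log_div_self_sub_le_a_s {x : ℝ} (hx : 0 < x) :
    1 + log x / x - log x ^ 2 / x ≤ a_s x := by
  have hlog := log_le_sub_one_of_pos hx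
  calc 1 + log x / x - log x ^ 2 / x = (log x / x + 1) * (x + 1 - log x) - x := by
        field_simp; ring
    _ ≤ exp (log x / x) * (x + 1 - log x) - x := by
      gcongr
      exacts [by linarith, add_one_le_exp _]
    _ = a_s x := (a_s_eq_exp hx).symm

lemma a_s_le_inv_one_sub_log_div_self {x : ℝ} (hx : 0 < x) :
    a_s x ≤ (1 - log x / x)⁻¹ := by
  have hlog := log_le_sub_one_of_pos hx
  have hgap : x - log x ≠ 0 := by linarith
  have hu : 0 < 1 - log x / x := sub_pos.2 ((div_lt_one hx).2 (by linarith))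
  have hexp : exp (log x / x) ≤ (1 - log x / x)⁻¹ := by
    rw [le_inv_comm₀ (exp_pos _) hu, ← exp_neg]
    exact one_sub_le_exp_neg _
  calc a_s x = exp (log x / x) * (x + 1 - log x) - x := a_s_eq_exp hx
    _ ≤ (1 - log x / x)⁻¹ * (x + 1 - log x) - x := by gcongr; linarith
    _ = (1 - log x / x)⁻¹ := by field_simp; ring

lemma tendsto_a_s_atTop : Tendsto a_s atTop (nhds 1) := by
  have hpow (k : ℕ) : Tendsto (fun x => log x ^ k / x) atTop (nhds 0) := by
    simpa using tendsto_pow_log_div_mul_add_atTop 1 0 k one_ne_zero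
  have hlog : Tendsto (fun x => log x / x) atTop (nhds 0) := by simpa using hpow 1
  have hlower : Tendsto (fun x => 1 + log x / x - log x ^ 2 / x) atTop (nhds 1) := by
    simpa using (hlog.const_add 1).sub (hpow 2)
  have hupper : Tendsto (fun x => (1 - log x / x)⁻¹) atTop (nhds 1) := by
    simpa using (hlog.const_sub 1).inv₀ (by norm_num)
  refine tendsto_of_tendsto_of_tendsto_of_le_of_le' hlower hupper ?_ ?_ <;>
    filter_upwards [eventually_gt_atTop 0] with x hx
  exacts [one_add_log_div_self_sub_le_a_s hx, a_s_le_inv_one_sub_log_div_self hx]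

/-- Theorem 1 (c), (d): `1 + a_s(n+1)/(n+1) < s_n < 1 + a_s(n)/n` for all `n ≥ 1`,
and `a_s(n) → 1` as `n → ∞`. -/
theorem s_estimates_and_a_s_tendsto :
    (∀ n : ℕ, 1 ≤ n →
      1 + a_s ((n : ℝ) + 1) / ((n : ℝ) + 1) < s n ∧ s n < 1 + a_s (n : ℝ) / (n : ℝ)) ∧
    Tendsto (fun n : ℕ => a_s (n : ℝ)) atTop (nhds 1) := by
  refine ⟨fun n hn => ?_, tendsto_a_s_atTop.comp tendsto_natCast_atTop_atTop⟩
  have hn' : (1 : ℝ) ≤ n := by exact_mod_cast hn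
  obtain ⟨c, ⟨hnc, hcn⟩, hs⟩ := exists_s_eq_T' hn
  rw [one_add_a_s_div_self (by positivity), one_add_a_s_div_self (by positivity), hs]
  have hc : (1 : ℝ) ≤ c := hn'.trans hnc.le
  exact ⟨strictAntiOn_T' hc (Set.mem_Ici.2 (by linarith)) hcn,
    strictAntiOn_T' hn' hc hnc⟩
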